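/- Let K ≥ 2, let c = (c_1, ..., c_K) be a random cost vector on (0,∞)^K with E[c_k] < ∞ for all k, independent of the label y, and define for a forecast p in the interior of the simplex and true class i the score S_F(p, i) := E[c_i] + Σ_{j ≠ i} E[c_j · (1(c_i/c_j > p_i/p_j) + (1/2)·1(c_i/c_j = p_i/p_j))]. Then S_F is a proper scoring rule: for every true label distribution π in the interior of the simplex, the Bayes risk Σ_k π_k S_F(p, k) is minimized at p = π. If moreover, for every i ≠ j, the ratio c_i / c_j has full support on (0, ∞), then S_F is strictly proper: p = π is the unique minimizer over the interior of the simplex. -/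

import Mathlib

open MeasureTheory Finset

/-- `hfun a b = 1(a > b) + (1/2)·1(a = b)`. -/
noncomputable def hfun (a b : ℝ) : ℝ :=
  (if b < a then 1 else 0) + (1 / 2) * (if a = b then 1 else 0)

/-- The expected total search cost under the ratio-ordering policy:
`S_F(p, i) = E[c i] + Σ_{j ≠ i} E[c j · (1(c i/c j > p i/p j) + (1/2)·1(c i/c j = p i/p j))]`. -/
noncomputable def SF {Ω : Type*} [MeasurableSpace Ω] (μ : Measure Ω) {K : ℕ}
    (c : Fin K → Ω → ℝ) (p : Fin K → ℝ) (i : Fin K) : ℝ :=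
  (∫ ω, c i ω ∂μ) + ∑ j ∈ univ.filter (fun j => j ≠ i),
    ∫ ω, c j ω * hfun (c i ω / c j ω) (p i / p j) ∂μ

lemma hfun_nonneg (a b : ℝ) : 0 ≤ hfun a b := by
  unfold hfun
  apply add_nonneg <;> split_ifs <;> norm_num

lemma hfun_le_one (a b : ℝ) : hfun a b ≤ 1 := by
  unfold hfun
  rcases lt_trichotomy a b with h | h | h
  · rw [if_neg (by linarith), if_neg h.ne]; norm_num
  · rw [if_neg (by linarith), if_pos h]; norm_num
  · rw [if_pos h, if_neg (by linarith : ¬ a = b)]; norm_num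

lemma hfun_inv {a b : ℝ} (ha : 0 < a) (hb : 0 < b) : hfun a⁻¹ b⁻¹ = 1 - hfun a b := by
  unfold hfun
  simp only [inv_lt_inv₀ hb ha, inv_inj]
  rcases lt_trichotomy a b with h | h | h
  · rw [if_pos h, if_neg h.ne, if_neg (by linarith)]; norm_num
  · rw [if_neg (by linarith), if_pos h, if_neg (by linarith)]; norm_num
  · rw [if_neg (by linarith), if_neg (by linarith : ¬ a = b), if_pos h]; norm_num

lemma hfun_key (r s t : ℝ) : 0 ≤ (t - r) * (hfun r s - hfun r t) := by
  unfold hfun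
  rcases lt_trichotomy r t with h1 | h1 | h1 <;>
  rcases lt_trichotomy r s with h2 | h2 | h2 <;>
  split_ifs <;> nlinarith

lemma hfun_strict {r s t : ℝ} (h1 : t < r) (h2 : r < s) : hfun r s - hfun r t = -1 := by
  unfold hfun
  rw [if_neg (by linarith), if_neg (by linarith : ¬ r = s), if_pos h1,
    if_neg (by linarith : ¬ r = t)]
  norm_num

lemma measurable_hfun (b : ℝ) : Measurable (fun a => hfun a b) := by
  unfold hfun
  apply Measurable.add
  · exact Measurable.ite measurableSet_Ioi measurable_const measurable_const
  · exact Measurable.const_mul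
      (Measurable.ite (measurableSet_singleton b) measurable_const measurable_const) _

lemma int_mul_hfun {Ω : Type*} [MeasurableSpace Ω] (μ : Measure Ω) (f g : Ω → ℝ)
    (hf : Measurable f) (hg : Measurable g) (hfpos : ∀ ω, 0 < f ω)
    (hfi : Integrable f μ) (b : ℝ) :
    Integrable (fun ω => f ω * hfun (g ω / f ω) b) μ := by
  apply Integrable.mono' hfi
    (hf.mul ((measurable_hfun b).comp (hg.div hf))).aestronglyMeasurable
  refine Filter.Eventually.of_forall fun ω => ?_
  simp only [Pi.mul_apply, Pi.div_apply, Function.comp_apply]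
  rw [Real.norm_eq_abs, abs_mul, abs_of_pos (hfpos ω), abs_of_nonneg (hfun_nonneg _ _)]
  calc f ω * hfun (g ω / f ω) b ≤ f ω * 1 :=
        mul_le_mul_of_nonneg_left (hfun_le_one _ _) (hfpos ω).le
    _ = f ω := mul_one _

lemma pair_int {Ω : Type*} [MeasurableSpace Ω] (μ : Measure Ω) (f g : Ω → ℝ)
    (hf : Measurable f) (hg : Measurable g) (hfpos : ∀ ω, 0 < f ω) (hgpos : ∀ ω, 0 < g ω)
    (hfi : Integrable f μ) (hgi : Integrable g μ)
    (α β : ℝ) {s t : ℝ} (hs : 0 < s) (ht : 0 < t) :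
    (α * ((∫ ω, f ω * hfun (g ω / f ω) s ∂μ) - ∫ ω, f ω * hfun (g ω / f ω) t ∂μ))
      + (β * ((∫ ω, g ω * hfun (f ω / g ω) s⁻¹ ∂μ) - ∫ ω, g ω * hfun (f ω / g ω) t⁻¹ ∂μ))
      = ∫ ω, (α * f ω - β * g ω) * (hfun (g ω / f ω) s - hfun (g ω / f ω) t) ∂μ := by
  have I1 := int_mul_hfun μ f g hf hg hfpos hfi s
  have I2 := int_mul_hfun μ f g hf hg hfpos hfi t
  have I3 := int_mul_hfun μ g f hg hf hgpos hgi s⁻¹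
  have I4 := int_mul_hfun μ g f hg hf hgpos hgi t⁻¹
  rw [mul_sub, mul_sub, ← integral_const_mul, ← integral_const_mul, ← integral_const_mul,
    ← integral_const_mul, ← integral_sub (I1.const_mul α) (I2.const_mul α),
    ← integral_sub (I3.const_mul β) (I4.const_mul β)]
  have I12 : Integrable (fun ω => α * (f ω * hfun (g ω / f ω) s)
      - α * (f ω * hfun (g ω / f ω) t)) μ := (I1.const_mul α).sub (I2.const_mul α)
  have I34 : Integrable (fun ω => β * (g ω * hfun (f ω / g ω) s⁻¹)
      - β * (g ω * hfun (f ω / g ω) t⁻¹)) μ := (I3.const_mul β).sub (I4.const_mul β)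
  rw [← integral_add I12 I34]
  refine integral_congr_ae (Filter.Eventually.of_forall fun ω => ?_)
  have hr : 0 < g ω / f ω := div_pos (hgpos ω) (hfpos ω)
  have e2 : f ω / g ω = (g ω / f ω)⁻¹ := (inv_div _ _).symm
  simp only [e2, hfun_inv hr hs, hfun_inv hr ht]
  ring

lemma integrand_nonneg {cj ck πk πj : ℝ} (hcj : 0 < cj) (hck : 0 < ck)
    (hπk : 0 < πk) (hπj : 0 < πj) (s : ℝ) :
    0 ≤ (πk * cj - πj * ck) * (hfun (ck / cj) s - hfun (ck / cj) (πk / πj)) := by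
  have h1 := hπj.ne'
  have h2 := hcj.ne'
  have e : πk * cj - πj * ck = (cj * πj) * (πk / πj - ck / cj) := by
    field_simp
  rw [e, mul_assoc]
  exact mul_nonneg (by positivity) (hfun_key _ s _)

lemma bayes_diff {Ω : Type*} [MeasurableSpace Ω] (μ : Measure Ω)
    {K : ℕ} (c : Fin K → Ω → ℝ) (hmeas : ∀ k, Measurable (c k))
    (hpos : ∀ k ω, 0 < c k ω) (hint : ∀ k, Integrable (c k) μ)
    (π p : Fin K → ℝ) (hπ : ∀ k, 0 < π k) (hp : ∀ k, 0 < p k) :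
    2 * ((∑ k, π k * SF μ c p k) - ∑ k, π k * SF μ c π k)
      = ∑ k, ∑ j ∈ univ.filter (fun j => j ≠ k),
          ∫ ω, (π k * c j ω - π j * c k ω) *
            (hfun (c k ω / c j ω) (p k / p j) - hfun (c k ω / c j ω) (π k / π j)) ∂μ := by
  set D : Fin K → Fin K → ℝ := fun k j =>
    π k * ((∫ ω, c j ω * hfun (c k ω / c j ω) (p k / p j) ∂μ)
      - ∫ ω, c j ω * hfun (c k ω / c j ω) (π k / π j) ∂μ) with hD
  have h1 : (∑ k, π k * SF μ c p k) - ∑ k, π k * SF μ c π k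
      = ∑ k, ∑ j ∈ univ.filter (fun j => j ≠ k), D k j := by
    rw [← Finset.sum_sub_distrib]
    refine Finset.sum_congr rfl fun k _ => ?_
    unfold SF
    rw [mul_add, mul_add, add_sub_add_left_eq_sub, Finset.mul_sum, Finset.mul_sum,
      ← Finset.sum_sub_distrib]
    exact Finset.sum_congr rfl fun j _ => (mul_sub _ _ _).symm
  have h2 : (∑ k, ∑ j ∈ univ.filter (fun j => j ≠ k), D k j)
      = ∑ k, ∑ j ∈ univ.filter (fun j => j ≠ k), D j k :=
    Finset.sum_comm' (fun x y => by simp [ne_comm])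
  rw [two_mul, h1]
  nth_rewrite 2 [h2]
  rw [← Finset.sum_add_distrib]
  refine Finset.sum_congr rfl fun k _ => ?_
  rw [← Finset.sum_add_distrib]
  refine Finset.sum_congr rfl fun j hj => ?_
  have e3 : p j / p k = (p k / p j)⁻¹ := (inv_div _ _).symm
  have e4 : π j / π k = (π k / π j)⁻¹ := (inv_div _ _).symm
  simp only [hD]
  rw [e3, e4]
  exact pair_int μ (c j) (c k) (hmeas j) (hmeas k) (fun ω => hpos j ω) (fun ω => hpos k ω)
    (hint j) (hint k) (π k) (π j) (div_pos (hp k) (hp j)) (div_pos (hπ k) (hπ j))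

/-- **Properness and strict propriety of expected search cost.** For `K ≥ 2` and a
random cost vector `c` on `(0,∞)^K` with integrable coordinates, the score `S_F` is
proper: for every true label distribution `π` in the interior of the simplex, the
Bayes risk `Σ_k π_k S_F(p, k)` over forecasts `p` in the interior of the simplex is
minimized at `p = π`.  If moreover every ratio `c i / c j` (`i ≠ j`) has full support
on `(0, ∞)`, then `S_F` is strictly proper: `p = π` is the unique minimizer. -/
theorem SF_proper_and_strictly_proper {Ω : Type*} [MeasurableSpace Ω] (μ : Measure Ω)
    [IsProbabilityMeasure μ] (K : ℕ) (hK : 2 ≤ K) (c : Fin K → Ω → ℝ)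
    (hmeas : ∀ k, Measurable (c k))
    (hpos : ∀ k ω, 0 < c k ω) (hint : ∀ k, Integrable (c k) μ) :
    (∀ π p : Fin K → ℝ, (∀ k, 0 < π k) → ∑ k, π k = 1 → (∀ k, 0 < p k) → ∑ k, p k = 1 →
      ∑ k, π k * SF μ c π k ≤ ∑ k, π k * SF μ c p k) ∧
    ((∀ i j : Fin K, i ≠ j → ∀ a b : ℝ, 0 < a → a < b →
        0 < μ {ω | c i ω / c j ω ∈ Set.Ioo a b}) →
      ∀ π p : Fin K → ℝ, (∀ k, 0 < π k) → ∑ k, π k = 1 → (∀ k, 0 < p k) → ∑ k, p k = 1 →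
        p ≠ π → ∑ k, π k * SF μ c π k < ∑ k, π k * SF μ c p k) := by
  constructor
  · intro π p hπ hπs hp hps
    have hd := bayes_diff μ c hmeas hpos hint π p hπ hp
    have hnn : 0 ≤ ∑ k, ∑ j ∈ univ.filter (fun j => j ≠ k),
        ∫ ω, (π k * c j ω - π j * c k ω) *
          (hfun (c k ω / c j ω) (p k / p j) - hfun (c k ω / c j ω) (π k / π j)) ∂μ := by
      refine Finset.sum_nonneg fun k _ => Finset.sum_nonneg fun j _ => integral_nonneg fun ω => ?_
      exact integrand_nonneg (hpos j ω) (hpos k ω) (hπ k) (hπ j) _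
    linarith
  · intro hsupp π p hπ hπs hp hps hne
    have hd := bayes_diff μ c hmeas hpos hint π p hπ hp
    -- find indices where p overshoots and undershoots
    have hex1 : ∃ i, π i < p i := by
      by_contra hcon
      push_neg at hcon
      exact hne (funext fun i =>
        (Finset.sum_eq_sum_iff_of_le (fun i _ => hcon i)).1 (hps.trans hπs.symm) i (mem_univ i))
    have hex2 : ∃ j, p j < π j := by
      by_contra hcon
      push_neg at hcon
      exact hne (funext fun i =>
        ((Finset.sum_eq_sum_iff_of_le (fun i _ => hcon i)).1 (hπs.trans hps.symm) i
          (mem_univ i)).symm)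
    obtain ⟨i, hi⟩ := hex1
    obtain ⟨j, hj⟩ := hex2
    have hij : i ≠ j := by rintro rfl; linarith
    have hts : π i / π j < p i / p j := by
      rw [div_lt_div_iff₀ (hπ j) (hp j)]
      nlinarith [mul_pos (sub_pos.2 hi) (hp j), mul_pos (hp i) (sub_pos.2 hj)]
    -- the (i,j) term is strictly positive
    have hTpos : 0 < ∫ ω, (π i * c j ω - π j * c i ω) *
        (hfun (c i ω / c j ω) (p i / p j) - hfun (c i ω / c j ω) (π i / π j)) ∂μ := by
      have hmg : Measurable (fun ω => (π i * c j ω - π j * c i ω) *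
          (hfun (c i ω / c j ω) (p i / p j) - hfun (c i ω / c j ω) (π i / π j))) := by
        apply Measurable.mul
        · exact (measurable_const.mul (hmeas j)).sub (measurable_const.mul (hmeas i))
        · exact ((measurable_hfun _).comp ((hmeas i).div (hmeas j))).sub
            ((measurable_hfun _).comp ((hmeas i).div (hmeas j)))
      have hInt : Integrable (fun ω => (π i * c j ω - π j * c i ω) *
          (hfun (c i ω / c j ω) (p i / p j) - hfun (c i ω / c j ω) (π i / π j))) μ := by
        apply Integrable.mono' (((hint j).const_mul (π i)).add ((hint i).const_mul (π j)))
          hmg.aestronglyMeasurable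
        refine Filter.Eventually.of_forall fun ω => ?_
        rw [Real.norm_eq_abs, abs_mul]
        have hp1 := mul_pos (hπ i) (hpos j ω)
        have hp2 := mul_pos (hπ j) (hpos i ω)
        have ha1 : |π i * c j ω - π j * c i ω| ≤ π i * c j ω + π j * c i ω :=
          abs_le.2 ⟨by linarith, by linarith⟩
        have ha2 : |hfun (c i ω / c j ω) (p i / p j) - hfun (c i ω / c j ω) (π i / π j)| ≤ 1 :=
          abs_le.2 ⟨by linarith [hfun_nonneg (c i ω / c j ω) (p i / p j),
              hfun_le_one (c i ω / c j ω) (π i / π j)],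
            by linarith [hfun_le_one (c i ω / c j ω) (p i / p j),
              hfun_nonneg (c i ω / c j ω) (π i / π j)]⟩
        calc |π i * c j ω - π j * c i ω| *
              |hfun (c i ω / c j ω) (p i / p j) - hfun (c i ω / c j ω) (π i / π j)|
            ≤ (π i * c j ω + π j * c i ω) * 1 :=
              mul_le_mul ha1 ha2 (abs_nonneg _) (by positivity)
          _ = π i * c j ω + π j * c i ω := mul_one _
      have hnn0 : (0 : Ω → ℝ) ≤ fun ω => (π i * c j ω - π j * c i ω) *
          (hfun (c i ω / c j ω) (p i / p j) - hfun (c i ω / c j ω) (π i / π j)) :=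
        fun ω => integrand_nonneg (hpos j ω) (hpos i ω) (hπ i) (hπ j) _
      rw [integral_pos_iff_support_of_nonneg hnn0 hInt]
      refine lt_of_lt_of_le
        (hsupp i j hij (π i / π j) (p i / p j) (div_pos (hπ i) (hπ j)) hts)
        (measure_mono fun ω hω => ?_)
      simp only [Set.mem_setOf_eq, Set.mem_Ioo] at hω
      simp only [Function.mem_support]
      have hlt : π i * c j ω < π j * c i ω := by
        have := (div_lt_div_iff₀ (hπ j) (hpos j ω)).1 hω.1
        linarith
      rw [hfun_strict hω.1 hω.2, mul_neg_one]
      intro hc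
      have : π i * c j ω - π j * c i ω = 0 := by linarith [neg_eq_zero.1 hc]
      linarith
    have hsum : 0 < ∑ k, ∑ j' ∈ univ.filter (fun j' => j' ≠ k),
        ∫ ω, (π k * c j' ω - π j' * c k ω) *
          (hfun (c k ω / c j' ω) (p k / p j') - hfun (c k ω / c j' ω) (π k / π j')) ∂μ := by
      refine Finset.sum_pos' (fun k _ => Finset.sum_nonneg fun j' _ =>
        integral_nonneg fun ω => integrand_nonneg (hpos j' ω) (hpos k ω) (hπ k) (hπ j') _)
        ⟨i, mem_univ i, ?_⟩
      refine Finset.sum_pos' (fun j' _ =>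
        integral_nonneg fun ω => integrand_nonneg (hpos j' ω) (hpos i ω) (hπ i) (hπ j') _)
        ⟨j, ?_, hTpos⟩
      simp [Ne.symm hij]
    linarith
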